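/- The spherically symmetric symmetry functions f_I^î satisfy the integrability equations X_I(f_J^k̂) − X_J(f_I^k̂) − f_I^î f_J^ĵ C^k̂_{îĵ} = C^K_{IJ} f_K^k̂ on U for all I, J ∈ {1,2,3} and k̂ ∈ {1,2,3}, where the structure constants in both index types are those of so(3): C^3_{12} = −1, C^2_{13} = 1, C^1_{23} = −1 (extended antisymmetrically, all others zero), and likewise C^3̂_{1̂2̂} = −1, C^2̂_{1̂3̂} = 1, C^1̂_{2̂3̂} = −1. -/

import Mathlib

/-!
Only the `1̂` components `f₁ = cos φ / sin θ` and `f₂ = sin φ / sin θ` are nonzero, and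
`Ĉ^k̂_{1̂1̂} = 0`, so the quadratic term vanishes, every term vanishes for `k̂ ≠ 1̂`, and for
`k̂ = 1̂` the equations reduce to `X_I(f_J) − X_J(f_I) = C^K_{IJ} f_K`. Since `X₃ = ∂_φ`
rotates `(f₁, f₂)` into `(−f₂, f₁)`, and `X₁(f₂) = X₂(f₁) = cos 2φ cos θ / sin² θ`, these are
exactly the so(3) relations.
-/

open Real

/-- Partial derivative of a scalar function on ℝ⁴ in the μ-th coordinate direction. -/
noncomputable def pd (f : (Fin 4 → ℝ) → ℝ) (μ : Fin 4) (p : Fin 4 → ℝ) : ℝ :=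
  fderiv ℝ f p (Pi.single μ 1)

/-- The spherical symmetry generators X₁, X₂, X₃ (coordinates (t,r,θ,φ)). -/
noncomputable def Xsph : Fin 3 → (Fin 4 → ℝ) → Fin 4 → ℝ :=
  ![fun p => ![0, 0, Real.sin (p 3), Real.cos (p 3) / Real.tan (p 2)],
    fun p => ![0, 0, -Real.cos (p 3), Real.sin (p 3) / Real.tan (p 2)],
    fun _ => ![0, 0, 0, 1]]

/-- The spherically symmetric symmetry functions: f₁^1̂ = cosφ/sinθ,
    f₂^1̂ = sinφ/sinθ, all other f_I^î = 0. -/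
noncomputable def fsph : Fin 3 → Fin 3 → (Fin 4 → ℝ) → ℝ :=
  fun I i p =>
    if I = 0 ∧ i = 0 then Real.cos (p 3) / Real.sin (p 2)
    else if I = 1 ∧ i = 0 then Real.sin (p 3) / Real.sin (p 2)
    else 0

/-- so(3) structure constants: C^3_{12} = −1, C^2_{13} = 1, C^1_{23} = −1,
    extended antisymmetrically; all others zero. (C K I J, first index upper.) -/
def Cso3 : Fin 3 → Fin 3 → Fin 3 → ℝ :=
  ![![![0,0,0], ![0,0,-1], ![0,1,0]],
    ![![0,0,1], ![0,0,0], ![-1,0,0]],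
    ![![0,-1,0], ![1,0,0], ![0,0,0]]]

noncomputable def dirDeriv (X : (Fin 4 → ℝ) → Fin 4 → ℝ) (f : (Fin 4 → ℝ) → ℝ)
    (p : Fin 4 → ℝ) : ℝ :=
  ∑ μ, X p μ * pd f μ p

@[simp]
lemma dirDeriv_zero (X : (Fin 4 → ℝ) → Fin 4 → ℝ) (p : Fin 4 → ℝ) : dirDeriv X 0 p = 0 := by
  simp [dirDeriv, pd]

section PartialDerivatives

variable {p : Fin 4 → ℝ}

lemma pd_comp_apply {g : ℝ → ℝ} {g' : ℝ} {i : Fin 4} (hg : HasDerivAt g g' (p i))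
    (μ : Fin 4) : pd (fun q => g (q i)) μ p = (Pi.single i g' : Fin 4 → ℝ) μ := by
  have hproj : HasFDerivAt (fun q : Fin 4 → ℝ => q i)
      (ContinuousLinearMap.proj (R := ℝ) (φ := fun _ : Fin 4 => ℝ) i) p :=
    hasFDerivAt_apply i p
  have h : HasFDerivAt (fun q => g (q i)) (g' • ContinuousLinearMap.proj i) p :=
    hg.comp_hasFDerivAt p hproj
  rw [pd, h.fderiv]
  rcases eq_or_ne μ i with rfl | hμ <;> simp [*]

lemma pd_mul {f g : (Fin 4 → ℝ) → ℝ} (hf : DifferentiableAt ℝ f p)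
    (hg : DifferentiableAt ℝ g p) (μ : Fin 4) :
    pd (fun q => f q * g q) μ p = pd f μ p * g p + f p * pd g μ p := by
  simp only [pd, fderiv_fun_mul hf hg, add_apply, smul_apply, smul_eq_mul]
  ring

end PartialDerivatives

lemma dirDeriv_div_sin {X : (Fin 4 → ℝ) → Fin 4 → ℝ} {g : ℝ → ℝ} {g' : ℝ}
    {p : Fin 4 → ℝ} (hX₀ : X p 0 = 0) (hX₁ : X p 1 = 0) (hg : HasDerivAt g g' (p 3))
    (hs : sin (p 2) ≠ 0) :
    dirDeriv X (fun q => g (q 3) / sin (q 2)) p =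
      X p 3 * g' / sin (p 2) - X p 2 * g (p 3) * cos (p 2) / sin (p 2) ^ 2 := by
  have hinv : HasDerivAt (fun θ => (sin θ)⁻¹) (-cos (p 2) / sin (p 2) ^ 2) (p 2) :=
    (hasDerivAt_sin _).inv hs
  have hpd := pd_mul (hg.differentiableAt.comp p (differentiableAt_apply 3 p))
    (hinv.differentiableAt.comp p (differentiableAt_apply 2 p))
  simp only [Function.comp_def, ← div_eq_mul_inv, pd_comp_apply hg,
    pd_comp_apply hinv] at hpd
  simp only [dirDeriv, Fin.sum_univ_four, hX₀, hX₁, hpd]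
  simp only [ne_eq, Fin.reduceEq, not_false_eq_true, Pi.single_eq_of_ne, Pi.single_eq_same,
    zero_div, mul_zero, add_zero, zero_add]
  ring

lemma div_tan (a θ : ℝ) : a / tan θ = a * cos θ / sin θ := by
  rw [tan_eq_sin_div_cos, div_div_eq_mul_div]

lemma Xsph_apply_zero (I : Fin 3) (p : Fin 4 → ℝ) : Xsph I p 0 = 0 := by
  fin_cases I <;> rfl

lemma Xsph_apply_one (I : Fin 3) (p : Fin 4 → ℝ) : Xsph I p 1 = 0 := by
  fin_cases I <;> rfl

lemma fsph_zero_zero : fsph 0 0 = fun q => cos (q 3) / sin (q 2) := rfl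

lemma fsph_one_zero : fsph 1 0 = fun q => sin (q 3) / sin (q 2) := rfl

lemma fsph_two (k : Fin 3) : fsph 2 k = 0 := rfl

lemma fsph_of_ne_zero (I : Fin 3) {k : Fin 3} (hk : k ≠ 0) : fsph I k = 0 := by
  funext p
  simp [fsph, hk]

section SymmetryFunctions

variable {p : Fin 4 → ℝ} (hs : sin (p 2) ≠ 0)
include hs

lemma dirDeriv_Xsph_zero_fsph_one_zero :
    dirDeriv (Xsph 0) (fsph 1 0) p =
      (cos (p 3) ^ 2 - sin (p 3) ^ 2) * cos (p 2) / sin (p 2) ^ 2 := by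
  rw [fsph_one_zero, dirDeriv_div_sin (Xsph_apply_zero 0 p) (Xsph_apply_one 0 p)
    (hasDerivAt_sin _) hs]
  simp only [Xsph, Matrix.cons_val, div_tan]
  field_simp

lemma dirDeriv_Xsph_one_fsph_zero_zero :
    dirDeriv (Xsph 1) (fsph 0 0) p =
      (cos (p 3) ^ 2 - sin (p 3) ^ 2) * cos (p 2) / sin (p 2) ^ 2 := by
  rw [fsph_zero_zero, dirDeriv_div_sin (Xsph_apply_zero 1 p) (Xsph_apply_one 1 p)
    (hasDerivAt_cos _) hs]
  simp only [Xsph, Matrix.cons_val, div_tan]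
  field_simp
  ring

lemma dirDeriv_Xsph_two_fsph_zero_zero : dirDeriv (Xsph 2) (fsph 0 0) p = -fsph 1 0 p := by
  rw [fsph_zero_zero, dirDeriv_div_sin (Xsph_apply_zero 2 p) (Xsph_apply_one 2 p)
    (hasDerivAt_cos _) hs]
  simp [Xsph, fsph, neg_div]

lemma dirDeriv_Xsph_two_fsph_one_zero : dirDeriv (Xsph 2) (fsph 1 0) p = fsph 0 0 p := by
  rw [fsph_one_zero, dirDeriv_div_sin (Xsph_apply_zero 2 p) (Xsph_apply_one 2 p)
    (hasDerivAt_sin _) hs]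
  simp [Xsph, fsph]

lemma dirDeriv_Xsph_fsph_sub_comm (I J : Fin 3) :
    dirDeriv (Xsph I) (fsph J 0) p - dirDeriv (Xsph J) (fsph I 0) p =
      ∑ K, Cso3 K I J * fsph K 0 p := by
  fin_cases I <;> fin_cases J <;>
    simp [Fin.sum_univ_three, Cso3, fsph_two, dirDeriv_Xsph_zero_fsph_one_zero hs,
      dirDeriv_Xsph_one_fsph_zero_zero hs, dirDeriv_Xsph_two_fsph_zero_zero hs,
      dirDeriv_Xsph_two_fsph_one_zero hs]

end SymmetryFunctions

lemma sum_fsph_mul_fsph_mul_Cso3 (I J k : Fin 3) (p : Fin 4 → ℝ) :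
    ∑ i, ∑ j, fsph I i p * fsph J j p * Cso3 k i j = 0 := by
  fin_cases k <;> simp [Fin.sum_univ_three, Cso3, fsph_of_ne_zero]

/-- The spherically symmetric symmetry functions satisfy the integrability equations
    X_I(f_J^k̂) − X_J(f_I^k̂) − f_I^î f_J^ĵ Ĉ^k̂_{îĵ} = C^K_{IJ} f_K^k̂ on U. -/
theorem spherical_symmetry_functions_integrability :
    ∀ (I J : Fin 3) (k : Fin 3), ∀ p : Fin 4 → ℝ, 0 < p 2 → p 2 < Real.pi →
      (∑ μ, Xsph I p μ * pd (fsph J k) μ p) - (∑ μ, Xsph J p μ * pd (fsph I k) μ p)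
        - (∑ i, ∑ j, fsph I i p * fsph J j p * Cso3 k i j)
      = ∑ K, Cso3 K I J * fsph K k p := by
  intro I J k p hθ₀ hθπ
  have hs : sin (p 2) ≠ 0 := (sin_pos_of_pos_of_lt_pi hθ₀ hθπ).ne'
  rw [sum_fsph_mul_fsph_mul_Cso3, sub_zero]
  change dirDeriv (Xsph I) (fsph J k) p - dirDeriv (Xsph J) (fsph I k) p = _
  rcases eq_or_ne k 0 with rfl | hk
  · exact dirDeriv_Xsph_fsph_sub_comm hs I J
  · simp [fsph_of_ne_zero _ hk]
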